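/- arXiv:0707.0456 — 2 statements merged into one kernel-verified Lean document; each statement's English description precedes it below -/
import Mathlib

section
/- Let X₁ and X₂ be nonempty metric spaces and equip X₁ × X₂ with the ℓ² product metric. Then X₁ × X₂ is midpoint secure if and only if both X₁ and X₂ are midpoint secure. -/
/-- A map `γ : ℝ → X` (viewed on `[0,1]`) is a geodesic with speed `L` if `L > 0` and
every `t ∈ [0,1]` has a neighborhood `U ⊆ ℝ` on which `γ` is a local isometry up to
the factor `L`: `dist (γ s) (γ s') = L * |s - s'|` for `s, s' ∈ U ∩ [0,1]`. -/
def IsGeodesicWithSpeed {X : Type*} [MetricSpace X] (γ : ℝ → X) (L : ℝ) : Prop :=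
  0 < L ∧ ∀ t ∈ Set.Icc (0:ℝ) 1, ∃ U ∈ nhds t,
    ∀ s ∈ U ∩ Set.Icc (0:ℝ) 1, ∀ s' ∈ U ∩ Set.Icc (0:ℝ) 1,
      dist (γ s) (γ s') = L * |s - s'|

/-- A geodesic is a map with some positive speed. -/
def IsGeodesic {X : Type*} [MetricSpace X] (γ : ℝ → X) : Prop :=
  ∃ L : ℝ, IsGeodesicWithSpeed γ L

/-- `B` is a blocking set for the configuration `(x, y)`: every geodesic joining `x` to `y`
has an interior point in `B`. -/
def Blocks {X : Type*} [MetricSpace X] (x y : X) (B : Set X) : Prop :=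
  ∀ γ : ℝ → X, IsGeodesic γ → γ 0 = x → γ 1 = y → ∃ t ∈ Set.Ioo (0:ℝ) 1, γ t ∈ B

/-- The configuration `(x, y)` is secure: it has a finite blocking set. -/
def Secure {X : Type*} [MetricSpace X] (x y : X) : Prop :=
  ∃ B : Set X, B.Finite ∧ Blocks x y B

/-- `B` is a midpoint blocking set for `(x, y)`: every geodesic joining `x` to `y`
has its midpoint in `B`. -/
def MidpointBlocks {X : Type*} [MetricSpace X] (x y : X) (B : Set X) : Prop :=
  ∀ γ : ℝ → X, IsGeodesic γ → γ 0 = x → γ 1 = y → γ (1/2 : ℝ) ∈ B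

/-- The configuration `(x, y)` is midpoint secure: it has a finite midpoint blocking set. -/
def MidpointSecure {X : Type*} [MetricSpace X] (x y : X) : Prop :=
  ∃ B : Set X, B.Finite ∧ MidpointBlocks x y B

/-- A metric space is midpoint secure if every configuration in it is midpoint secure. -/
def MidpointSecureSpace (X : Type*) [MetricSpace X] : Prop :=
  ∀ x y : X, MidpointSecure x y

/-! For `s < u < s'` on a geodesic `γ` of the `ℓ²` product, the equality
`d(γ s, γ s') = d(γ s, γ u) + d(γ u, γ s')` is an equality case of the triangle inequality in the
Euclidean plane of component distances. It forces each component to pass through `γ u` at the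
same proportion, so near every time each component moves at a constant speed. The local speed is
locally constant, hence constant on the connected interval `[0,1]`: each component is a geodesic
or constant, and the midpoint of `γ` lies in `insert x₁ B₁ × insert x₂ B₂`. Conversely each factor
embeds isometrically as a slice of the product, and finite midpoint blocking sets pull back along
isometries. -/

open Set Filter Topology

/-- Equality case of the triangle inequality in the Euclidean plane: `C = A + B` with `A` and `B`
positively proportional (equality in Cauchy–Schwarz). -/
theorem eq_mul_of_sq_add_sq_eq_add_sq {A₁ A₂ B₁ B₂ C₁ C₂ p q : ℝ}
    (hC₁ : 0 ≤ C₁) (hC₂ : 0 ≤ C₂) (hp : 0 ≤ p) (hq : 0 ≤ q)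
    (h₁ : C₁ ≤ A₁ + B₁) (h₂ : C₂ ≤ A₂ + B₂)
    (hA : A₁ ^ 2 + A₂ ^ 2 = p ^ 2) (hB : B₁ ^ 2 + B₂ ^ 2 = q ^ 2)
    (hC : C₁ ^ 2 + C₂ ^ 2 = (p + q) ^ 2) :
    A₁ * (p + q) = C₁ * p ∧ B₁ * (p + q) = C₁ * q := by
  have lagrange : (A₁ * B₁ + A₂ * B₂) ^ 2 + (A₁ * B₂ - A₂ * B₁) ^ 2 = (p * q) ^ 2 := by
    linear_combination (B₁ ^ 2 + B₂ ^ 2) * hA + p ^ 2 * hB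
  have hS : A₁ * B₁ + A₂ * B₂ = p * q := by
    have : p * q ≤ A₁ * B₁ + A₂ * B₂ := by nlinarith
    nlinarith [sq_nonneg (A₁ * B₂ - A₂ * B₁), mul_nonneg hp hq]
  have hC₁_eq : C₁ = A₁ + B₁ := by nlinarith
  have hcross : (A₁ * B₂ - A₂ * B₁) ^ 2 = 0 := by
    linear_combination lagrange - (A₁ * B₁ + A₂ * B₂ + p * q) * hS
  have hpar : A₁ * q = B₁ * p := by
    have : (A₁ * q - B₁ * p) ^ 2 = 0 := by
      linear_combination hcross - A₁ ^ 2 * hB - B₁ ^ 2 * hA + 2 * A₁ * B₁ * hS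
    exact sub_eq_zero.mp (pow_eq_zero_iff two_ne_zero |>.mp this)
  exact ⟨by linear_combination hpar - p * hC₁_eq, by linear_combination -hpar - q * hC₁_eq⟩

section WithLpProd

variable {X₁ X₂ : Type*} [MetricSpace X₁] [MetricSpace X₂]

theorem WithLp.prod_dist_sq_eq_of_L2 (x y : WithLp 2 (X₁ × X₂)) :
    dist x y ^ 2 = dist x.fst y.fst ^ 2 + dist x.snd y.snd ^ 2 := by
  rw [WithLp.prod_dist_eq_add (by norm_num), ENNReal.toReal_ofNat, ← Real.sqrt_eq_rpow]
  norm_cast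
  exact Real.sq_sqrt (by positivity)

theorem WithLp.isometry_toLp_prod_mk_const (c : X₂) :
    Isometry (fun x : X₁ => WithLp.toLp 2 (x, c)) :=
  Isometry.of_dist_eq fun x y => by
    rw [← pow_left_inj₀ dist_nonneg dist_nonneg two_ne_zero, WithLp.prod_dist_sq_eq_of_L2]
    simp

theorem WithLp.isometry_toLp_prod_const_mk (c : X₁) :
    Isometry (fun x : X₂ => WithLp.toLp 2 (c, x)) :=
  Isometry.of_dist_eq fun x y => by
    rw [← pow_left_inj₀ dist_nonneg dist_nonneg two_ne_zero, WithLp.prod_dist_sq_eq_of_L2]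
    simp

theorem WithLp.prod_dist_components_of_dist_add_dist_eq {x y z : WithLp 2 (X₁ × X₂)}
    (h : dist x y + dist y z = dist x z) :
    (dist x.fst y.fst * dist x z = dist x.fst z.fst * dist x y ∧
      dist y.fst z.fst * dist x z = dist x.fst z.fst * dist y z) ∧
    (dist x.snd y.snd * dist x z = dist x.snd z.snd * dist x y ∧
      dist y.snd z.snd * dist x z = dist x.snd z.snd * dist y z) := by
  have hA := (prod_dist_sq_eq_of_L2 x y).symm
  have hB := (prod_dist_sq_eq_of_L2 y z).symm
  have hC := (prod_dist_sq_eq_of_L2 x z).symm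
  rw [← h] at hC ⊢
  constructor
  · exact eq_mul_of_sq_add_sq_eq_add_sq dist_nonneg dist_nonneg dist_nonneg dist_nonneg
      (dist_triangle _ _ _) (dist_triangle _ _ _) hA hB hC
  · rw [add_comm (dist x.fst y.fst ^ 2)] at hA
    rw [add_comm (dist y.fst z.fst ^ 2)] at hB
    rw [add_comm (dist x.fst z.fst ^ 2)] at hC
    exact eq_mul_of_sq_add_sq_eq_add_sq dist_nonneg dist_nonneg dist_nonneg dist_nonneg
      (dist_triangle _ _ _) (dist_triangle _ _ _) hA hB hC

end WithLpProd

section Isometry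

variable {X Y : Type*} [MetricSpace X] [MetricSpace Y] {φ : X → Y}

theorem Isometry.isGeodesic_comp (hφ : Isometry φ) {γ : ℝ → X} (hγ : IsGeodesic γ) :
    IsGeodesic (φ ∘ γ) := by
  obtain ⟨L, hL, hγL⟩ := hγ
  refine ⟨L, hL, fun t ht => ?_⟩
  obtain ⟨U, hU, hd⟩ := hγL t ht
  exact ⟨U, hU, fun s hs s' hs' => (hφ.dist_eq _ _).trans (hd s hs s' hs')⟩

theorem Isometry.midpointSecure (hφ : Isometry φ) {x y : X} (h : MidpointSecure (φ x) (φ y)) :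
    MidpointSecure x y := by
  obtain ⟨B, hB, hBm⟩ := h
  exact ⟨φ ⁻¹' B, hB.preimage hφ.injective.injOn, fun γ hγ h₀ h₁ =>
    hBm (φ ∘ γ) (hφ.isGeodesic_comp hγ) (congrArg φ h₀) (congrArg φ h₁)⟩

theorem Isometry.midpointSecureSpace (hφ : Isometry φ) (h : MidpointSecureSpace Y) :
    MidpointSecureSpace X :=
  fun x y => hφ.midpointSecure (h (φ x) (φ y))

end Isometry

section LocalSpeed

variable {X : Type*} [MetricSpace X]

/-- A geodesic with speed `L` is exactly a map with local speed `L` at every point of `[0,1]`. -/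
def HasLocalSpeedAt (f : ℝ → X) (a t : ℝ) : Prop :=
  ∃ U ∈ 𝓝 t, ∀ s ∈ U ∩ Icc (0 : ℝ) 1, ∀ s' ∈ U ∩ Icc (0 : ℝ) 1, dist (f s) (f s') = a * |s - s'|

theorem exists_ne_mem_inter_Icc {t : ℝ} (ht : t ∈ Icc (0 : ℝ) 1) {U : Set ℝ} (hU : U ∈ 𝓝 t) :
    ∃ s ∈ U ∩ Icc (0 : ℝ) 1, s ≠ t := by
  rcases ht.2.lt_or_eq with h | rfl
  · obtain ⟨s, hsU, hs⟩ :=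
      Filter.nonempty_of_mem (inter_mem (mem_nhdsWithin_of_mem_nhds hU) (Ioo_mem_nhdsGT h))
    exact ⟨s, ⟨hsU, ht.1.trans hs.1.le, hs.2.le⟩, hs.1.ne'⟩
  · obtain ⟨s, hsU, hs⟩ :=
      Filter.nonempty_of_mem (inter_mem (mem_nhdsWithin_of_mem_nhds hU) (Ioo_mem_nhdsLT one_pos))
    exact ⟨s, ⟨hsU, hs.1.le, hs.2.le⟩, hs.2.ne⟩

theorem HasLocalSpeedAt.eventually {f : ℝ → X} {a t : ℝ} (h : HasLocalSpeedAt f a t) :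
    ∀ᶠ s in 𝓝 t, HasLocalSpeedAt f a s := by
  obtain ⟨U, hU, hf⟩ := h
  filter_upwards [eventually_mem_nhds_iff.2 hU] with s hs
  exact ⟨U, hs, hf⟩

theorem HasLocalSpeedAt.nonneg {f : ℝ → X} {a t : ℝ} (ht : t ∈ Icc (0 : ℝ) 1)
    (h : HasLocalSpeedAt f a t) : 0 ≤ a := by
  obtain ⟨U, hU, hf⟩ := h
  obtain ⟨s, hs, hst⟩ := exists_ne_mem_inter_Icc ht hU
  refine nonneg_of_mul_nonneg_left ?_ (abs_pos.2 (sub_ne_zero.2 hst))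
  exact (hf s hs t ⟨mem_of_mem_nhds hU, ht⟩).symm ▸ dist_nonneg

theorem HasLocalSpeedAt.eq {f : ℝ → X} {a b t : ℝ} (ht : t ∈ Icc (0 : ℝ) 1)
    (ha : HasLocalSpeedAt f a t) (hb : HasLocalSpeedAt f b t) : a = b := by
  obtain ⟨U, hU, hfU⟩ := ha
  obtain ⟨V, hV, hfV⟩ := hb
  obtain ⟨s, ⟨⟨hsU, hsV⟩, hs⟩, hst⟩ := exists_ne_mem_inter_Icc ht (inter_mem hU hV)
  have htUV : t ∈ U ∩ V := ⟨mem_of_mem_nhds hU, mem_of_mem_nhds hV⟩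
  refine mul_right_cancel₀ (abs_ne_zero.2 (sub_ne_zero.2 hst)) ?_
  rw [← hfU s ⟨hsU, hs⟩ t ⟨htUV.1, ht⟩, ← hfV s ⟨hsV, hs⟩ t ⟨htUV.2, ht⟩]

theorem exists_forall_hasLocalSpeedAt {f : ℝ → X}
    (h : ∀ t ∈ Icc (0 : ℝ) 1, ∃ a, HasLocalSpeedAt f a t) :
    ∃ a, ∀ t ∈ Icc (0 : ℝ) 1, HasLocalSpeedAt f a t := by
  obtain ⟨a, ha⟩ := h 0 ⟨le_rfl, zero_le_one⟩
  refine ⟨a, fun t ht => ?_⟩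
  have key := isPreconnected_Icc.induction₂
    (fun x y => ∀ b, HasLocalSpeedAt f b x ↔ HasLocalSpeedAt f b y) ?_
    (fun x y z _ _ _ hxy hyz b => (hxy b).trans (hyz b))
    (fun x y _ _ hxy b => (hxy b).symm) ⟨le_rfl, zero_le_one⟩ ht
  · exact (key a).1 ha
  intro x hx
  obtain ⟨c, hc⟩ := h x hx
  filter_upwards [nhdsWithin_le_nhds hc.eventually, self_mem_nhdsWithin] with y hcy hy b
  exact ⟨fun hb => hb.eq hx hc ▸ hcy, fun hb => hb.eq hy hcy ▸ hc⟩

theorem eq_of_forall_hasLocalSpeedAt_zero {f : ℝ → X}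
    (h : ∀ t ∈ Icc (0 : ℝ) 1, HasLocalSpeedAt f 0 t) {t t' : ℝ}
    (ht : t ∈ Icc (0 : ℝ) 1) (ht' : t' ∈ Icc (0 : ℝ) 1) : f t = f t' := by
  refine isPreconnected_Icc.induction₂ (fun x y => f x = f y) (fun x hx => ?_)
    (fun _ _ _ _ _ _ => Eq.trans) (fun _ _ _ _ => Eq.symm) ht ht'
  obtain ⟨U, hU, hf⟩ := h x hx
  filter_upwards [nhdsWithin_le_nhds hU, self_mem_nhdsWithin] with y hyU hy
  simpa using hf x ⟨mem_of_mem_nhds hU, hx⟩ y ⟨hyU, hy⟩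

theorem mem_insert_of_midpointBlocks {f : ℝ → X} {a : ℝ} {B : Set X}
    (hB : MidpointBlocks (f 0) (f 1) B) (h : ∀ t ∈ Icc (0 : ℝ) 1, HasLocalSpeedAt f a t) :
    f (1 / 2) ∈ insert (f 0) B := by
  have h₀ : (0 : ℝ) ∈ Icc (0 : ℝ) 1 := ⟨le_rfl, zero_le_one⟩
  rcases ((h 0 h₀).nonneg h₀).eq_or_lt with rfl | ha
  · exact .inl (eq_of_forall_hasLocalSpeedAt_zero h ⟨by norm_num, by norm_num⟩ h₀)
  · exact .inr (hB f ⟨a, ha, h⟩ rfl rfl)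

theorem exists_forall_dist_eq_mul_abs_sub {f : ℝ → X} {J : Set ℝ}
    (h : ∀ s ∈ J, ∀ u ∈ J, ∀ s' ∈ J, s < u → u < s' →
      dist (f s) (f u) * (s' - s) = dist (f s) (f s') * (u - s) ∧
      dist (f u) (f s') * (s' - s) = dist (f s) (f s') * (s' - u)) :
    ∃ a, ∀ s ∈ J, ∀ s' ∈ J, dist (f s) (f s') = a * |s - s'| := by
  set g : ℝ → ℝ → ℝ := fun s s' => dist (f s) (f s') / (s' - s)
  have shrink_left : ∀ m ∈ J, ∀ s ∈ J, ∀ s' ∈ J, m ≤ s → s < s' → g s s' = g m s' := by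
    intro m hm s hs s' hs' hms hss'
    rcases hms.eq_or_lt with rfl | hms
    · rfl
    exact (div_eq_div_iff (by linarith) (by linarith)).2 (h m hm s hs s' hs' hms hss').2
  have shrink_right : ∀ s ∈ J, ∀ s' ∈ J, ∀ M ∈ J, s < s' → s' ≤ M → g s s' = g s M := by
    intro s hs s' hs' M hM hss' hs'M
    rcases hs'M.eq_or_lt with rfl | hs'M
    · rfl
    exact (div_eq_div_iff (by linarith) (by linarith)).2 (h s hs s' hs' M hM hss' hs'M).1
  by_cases hJ : ∃ α ∈ J, ∃ β ∈ J, α < β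
  swap
  · push Not at hJ
    refine ⟨0, fun s hs s' hs' => ?_⟩
    simp [le_antisymm (hJ s hs s' hs') (hJ s' hs' s hs)]
  obtain ⟨α, hα, β, hβ, hαβ⟩ := hJ
  have hconst : ∀ s ∈ J, ∀ s' ∈ J, s < s' → g s s' = g α β := by
    intro s hs s' hs' hss'
    have hm : min s α ∈ J := by rcases min_choice s α with h | h <;> rw [h] <;> assumption
    have hM : max s' β ∈ J := by rcases max_choice s' β with h | h <;> rw [h] <;> assumption
    calc g s s' = g (min s α) s' := shrink_left _ hm _ hs _ hs' (min_le_left _ _) hss'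
      _ = g (min s α) (max s' β) :=
        shrink_right _ hm _ hs' _ hM ((min_le_left _ _).trans_lt hss') (le_max_left _ _)
      _ = g (min s α) β :=
        (shrink_right _ hm _ hβ _ hM ((min_le_right _ _).trans_lt hαβ) (le_max_right _ _)).symm
      _ = g α β := (shrink_left _ hm _ hα _ hβ (min_le_right _ _) hαβ).symm
  have hlt : ∀ s ∈ J, ∀ s' ∈ J, s < s' → dist (f s) (f s') = g α β * |s - s'| := by
    intro s hs s' hs' hss'
    rw [← hconst s hs s' hs' hss', abs_sub_comm, abs_of_pos (sub_pos.2 hss'),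
      div_mul_cancel₀ _ (sub_pos.2 hss').ne']
  refine ⟨g α β, fun s hs s' hs' => ?_⟩
  rcases lt_trichotomy s s' with hss' | rfl | hs's
  · exact hlt s hs s' hs' hss'
  · simp
  · rw [dist_comm, abs_sub_comm]
    exact hlt s' hs' s hs hs's

end LocalSpeed

theorem HasLocalSpeedAt.withLp_prod {X₁ X₂ : Type*} [MetricSpace X₁] [MetricSpace X₂]
    {γ : ℝ → WithLp 2 (X₁ × X₂)} {L t : ℝ} (hL : 0 < L) (h : HasLocalSpeedAt γ L t) :
    (∃ a, HasLocalSpeedAt (fun s => (γ s).fst) a t) ∧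
      ∃ b, HasLocalSpeedAt (fun s => (γ s).snd) b t := by
  obtain ⟨U, hU, hγ⟩ := h
  have between : ∀ s ∈ U ∩ Icc (0 : ℝ) 1, ∀ u ∈ U ∩ Icc (0 : ℝ) 1, ∀ s' ∈ U ∩ Icc (0 : ℝ) 1,
      s < u → u < s' →
      (dist (γ s).fst (γ u).fst * (s' - s) = dist (γ s).fst (γ s').fst * (u - s) ∧
        dist (γ u).fst (γ s').fst * (s' - s) = dist (γ s).fst (γ s').fst * (s' - u)) ∧
      (dist (γ s).snd (γ u).snd * (s' - s) = dist (γ s).snd (γ s').snd * (u - s) ∧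
        dist (γ u).snd (γ s').snd * (s' - s) = dist (γ s).snd (γ s').snd * (s' - u)) := by
    intro s hs u hu s' hs' hsu hus'
    have hsu' : dist (γ s) (γ u) = L * (u - s) := by
      rw [hγ s hs u hu, abs_sub_comm, abs_of_pos (by linarith)]
    have hus'' : dist (γ u) (γ s') = L * (s' - u) := by
      rw [hγ u hu s' hs', abs_sub_comm, abs_of_pos (by linarith)]
    have hss' : dist (γ s) (γ s') = L * (s' - s) := by
      rw [hγ s hs s' hs', abs_sub_comm, abs_of_pos (by linarith)]
    have := WithLp.prod_dist_components_of_dist_add_dist_eq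
      (by rw [hsu', hus'', hss']; ring : dist (γ s) (γ u) + dist (γ u) (γ s') = dist (γ s) (γ s'))
    rw [hsu', hus'', hss'] at this
    simpa only [mul_left_comm _ L, mul_right_inj' hL.ne'] using this
  exact ⟨(exists_forall_dist_eq_mul_abs_sub fun s hs u hu s' hs' hsu hus' =>
      (between s hs u hu s' hs' hsu hus').1).imp fun a ha => ⟨U, hU, ha⟩,
    (exists_forall_dist_eq_mul_abs_sub fun s hs u hu s' hs' hsu hus' =>
      (between s hs u hu s' hs' hsu hus').2).imp fun b hb => ⟨U, hU, hb⟩⟩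

theorem IsGeodesic.withLp_prod {X₁ X₂ : Type*} [MetricSpace X₁] [MetricSpace X₂]
    {γ : ℝ → WithLp 2 (X₁ × X₂)} (hγ : IsGeodesic γ) :
    (∃ a, ∀ t ∈ Icc (0 : ℝ) 1, HasLocalSpeedAt (fun s => (γ s).fst) a t) ∧
      ∃ b, ∀ t ∈ Icc (0 : ℝ) 1, HasLocalSpeedAt (fun s => (γ s).snd) b t := by
  obtain ⟨L, hL, hγL⟩ := hγ
  exact ⟨exists_forall_hasLocalSpeedAt fun t ht => (HasLocalSpeedAt.withLp_prod hL (hγL t ht)).1,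
    exists_forall_hasLocalSpeedAt fun t ht => (HasLocalSpeedAt.withLp_prod hL (hγL t ht)).2⟩

theorem MidpointSecure.withLp_prod {X₁ X₂ : Type*} [MetricSpace X₁] [MetricSpace X₂]
    {x y : WithLp 2 (X₁ × X₂)} (h₁ : MidpointSecure x.fst y.fst)
    (h₂ : MidpointSecure x.snd y.snd) : MidpointSecure x y := by
  obtain ⟨B₁, hB₁, hB₁m⟩ := h₁
  obtain ⟨B₂, hB₂, hB₂m⟩ := h₂
  refine ⟨WithLp.toLp 2 '' (insert x.fst B₁ ×ˢ insert x.snd B₂),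
    ((hB₁.insert _).prod (hB₂.insert _)).image _, ?_⟩
  rintro γ hγ rfl rfl
  obtain ⟨⟨a, ha⟩, b, hb⟩ := hγ.withLp_prod
  exact ⟨((γ (1 / 2)).fst, (γ (1 / 2)).snd),
    ⟨mem_insert_of_midpointBlocks hB₁m ha, mem_insert_of_midpointBlocks hB₂m hb⟩, rfl⟩

/-- An ℓ² product of nonempty metric spaces is midpoint secure iff both factors are. -/
theorem stmt8 {X₁ X₂ : Type*} [MetricSpace X₁] [MetricSpace X₂]
    [Nonempty X₁] [Nonempty X₂] :
    MidpointSecureSpace (WithLp 2 (X₁ × X₂)) ↔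
      MidpointSecureSpace X₁ ∧ MidpointSecureSpace X₂ := by
  constructor
  · intro h
    obtain ⟨c₁⟩ := ‹Nonempty X₁›
    obtain ⟨c₂⟩ := ‹Nonempty X₂›
    exact ⟨(WithLp.isometry_toLp_prod_mk_const c₂).midpointSecureSpace h,
      (WithLp.isometry_toLp_prod_const_mk c₁).midpointSecureSpace h⟩
  · rintro ⟨h₁, h₂⟩ x y
    exact MidpointSecure.withLp_prod (h₁ x.fst y.fst) (h₂ x.snd y.snd)
end

section
/- Let X and Y be metric spaces, equip X × Y with the ℓ² product metric, and let x₁, x₂ ∈ X and y₁, y₂ ∈ Y. Suppose there exists an infinite family (γᵢ)_{i ∈ ℕ} of geodesics in X, each joining x₁ to x₂, such that for every t ∈ (0,1) and every b ∈ X the set {i ∈ ℕ : γᵢ(t) = b} is finite, and suppose there exists a geodesic σ in Y joining y₁ to y₂. Then the configuration ((x₁, y₁), (x₂, y₂)) is insecure in X × Y, i.e., no finite set B ⊆ X × Y has the property that every geodesic joining (x₁, y₁) to (x₂, y₂) has an interior point in B. (This abstracts the final Proposition of the paper: any configuration in N × M projecting to one of the constructed secure-but-not-midpoint-secure configurations of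 the surface N is insecure, for any Riemannian manifold M.) -/
/-!
Pair each `γᵢ` with `σ` to get infinitely many geodesics `t ↦ (γᵢ t, σ t)` of the product joining
the two configurations. A finite blocking set `B` would be hit by each of them at some interior
time `tᵢ`. Since a geodesic is locally injective on the compact interval `[0,1]`, `σ` visits the
finitely many second coordinates of `B` at only finitely many times, so the pairs
`(point hit, tᵢ)` range over a finite set; but each such pair `(b, s)` forces `γᵢ s = b.1`, which
holds for only finitely many `i`.
-/

open Set Filter Topology

lemma IsCompact.finite_inter_preimage_singleton {α β : Type*} [TopologicalSpace α] {K : Set α}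
    {f : α → β} (hK : IsCompact K) (hf : ∀ t ∈ K, ∃ U ∈ 𝓝 t, InjOn f (U ∩ K)) (b : β) :
    (K ∩ f ⁻¹' {b}).Finite := by
  choose U hU hinj using hf
  obtain ⟨T, hT⟩ := hK.elim_nhds_subcover' U hU
  have hcover : K ∩ f ⁻¹' {b} ⊆ ⋃ x ∈ T, U x x.2 ∩ K ∩ f ⁻¹' {b} := by
    rintro s ⟨hsK, hsb⟩
    obtain ⟨x, hx, hxs⟩ := mem_iUnion₂.mp (hT hsK)
    exact mem_biUnion hx ⟨⟨hxs, hsK⟩, hsb⟩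
  refine (T.finite_toSet.biUnion fun x _ => ?_).subset hcover
  refine Subsingleton.finite fun s hs s' hs' => hinj x x.2 hs.1 hs'.1 ?_
  rw [mem_preimage.mp hs.2, mem_preimage.mp hs'.2]

lemma WithLp.prod_dist_eq_sqrt {α β : Type*} [PseudoMetricSpace α] [PseudoMetricSpace β]
    (f g : WithLp 2 (α × β)) : dist f g = √(dist f.fst g.fst ^ 2 + dist f.snd g.snd ^ 2) := by
  rw [WithLp.prod_dist_eq_add (by norm_num), Real.sqrt_eq_rpow]
  norm_num

section

variable {X Y : Type*} [MetricSpace X] [MetricSpace Y]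

lemma IsGeodesicWithSpeed.prod {γ : ℝ → X} {σ : ℝ → Y} {L M : ℝ}
    (hγ : IsGeodesicWithSpeed γ L) (hσ : IsGeodesicWithSpeed σ M) :
    IsGeodesicWithSpeed (fun t => WithLp.toLp 2 (γ t, σ t)) √(L ^ 2 + M ^ 2) := by
  refine ⟨Real.sqrt_pos.mpr (by positivity [hγ.1]), fun t ht => ?_⟩
  obtain ⟨U, hU, hγU⟩ := hγ.2 t ht
  obtain ⟨V, hV, hσV⟩ := hσ.2 t ht
  refine ⟨U ∩ V, inter_mem hU hV, ?_⟩
  rintro s ⟨⟨hsU, hsV⟩, hs⟩ s' ⟨⟨hs'U, hs'V⟩, hs'⟩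
  calc dist (WithLp.toLp 2 (γ s, σ s)) (WithLp.toLp 2 (γ s', σ s'))
      = √((L * |s - s'|) ^ 2 + (M * |s - s'|) ^ 2) := by
        rw [WithLp.prod_dist_eq_sqrt, WithLp.toLp_fst, WithLp.toLp_fst, WithLp.toLp_snd,
          WithLp.toLp_snd, hγU s ⟨hsU, hs⟩ s' ⟨hs'U, hs'⟩,
          hσV s ⟨hsV, hs⟩ s' ⟨hs'V, hs'⟩]
    _ = √(L ^ 2 + M ^ 2) * |s - s'| := by
        rw [mul_pow, mul_pow, ← add_mul, Real.sqrt_mul' _ (sq_nonneg _), Real.sqrt_sq_eq_abs,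
          abs_abs]

lemma IsGeodesic.prod {γ : ℝ → X} {σ : ℝ → Y} (hγ : IsGeodesic γ) (hσ : IsGeodesic σ) :
    IsGeodesic (fun t => WithLp.toLp 2 (γ t, σ t)) :=
  let ⟨_, hL⟩ := hγ
  let ⟨_, hM⟩ := hσ
  ⟨_, hL.prod hM⟩

lemma IsGeodesicWithSpeed.locallyInjOn {σ : ℝ → Y} {L : ℝ} (hσ : IsGeodesicWithSpeed σ L) :
    ∀ t ∈ Icc (0 : ℝ) 1, ∃ U ∈ 𝓝 t, InjOn σ (U ∩ Icc 0 1) := by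
  intro t ht
  obtain ⟨U, hU, hσU⟩ := hσ.2 t ht
  refine ⟨U, hU, fun s hs s' hs' hss' => ?_⟩
  have h := hσU s hs s' hs'
  rw [hss', dist_self, eq_comm, mul_eq_zero, abs_eq_zero, sub_eq_zero] at h
  exact h.resolve_left hσ.1.ne'

lemma IsGeodesic.finite_inter_preimage {σ : ℝ → Y} (hσ : IsGeodesic σ) {S : Set Y}
    (hS : S.Finite) : (Icc (0 : ℝ) 1 ∩ σ ⁻¹' S).Finite := by
  obtain ⟨_, hL⟩ := hσ
  rw [← biUnion_of_singleton S, preimage_iUnion₂, inter_iUnion₂]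
  exact hS.biUnion fun b _ =>
    isCompact_Icc.finite_inter_preimage_singleton hL.locallyInjOn b

end

/-- If `X` contains infinitely many geodesics joining `x₁` to `x₂` such that at each
interior time `t` only finitely many of them pass through any given point, and `y₁, y₂`
are joined by a geodesic in `Y`, then the configuration `((x₁,y₁),(x₂,y₂))` is insecure
in the ℓ² product. -/
theorem stmt11 {X Y : Type*} [MetricSpace X] [MetricSpace Y]
    (x₁ x₂ : X) (y₁ y₂ : Y) (γ : ℕ → ℝ → X)
    (hγgeo : ∀ i, IsGeodesic (γ i))
    (hγjoin : ∀ i, γ i 0 = x₁ ∧ γ i 1 = x₂)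
    (hfin : ∀ t ∈ Set.Ioo (0:ℝ) 1, ∀ b : X, {i : ℕ | γ i t = b}.Finite)
    (σ : ℝ → Y) (hσ : IsGeodesic σ) (hσ0 : σ 0 = y₁) (hσ1 : σ 1 = y₂) :
    ¬ Secure ((WithLp.equiv 2 (X × Y)).symm (x₁, y₁))
      ((WithLp.equiv 2 (X × Y)).symm (x₂, y₂)) := by
  rintro ⟨B, hB, hblocks⟩
  have hits : ∀ i, ∃ t ∈ Ioo (0 : ℝ) 1, WithLp.toLp 2 (γ i t, σ t) ∈ B := fun i =>
    hblocks _ ((hγgeo i).prod hσ) (by simp [(hγjoin i).1, hσ0]) (by simp [(hγjoin i).2, hσ1])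
  set T := Ioo (0 : ℝ) 1 ∩ σ ⁻¹' ((fun b => (WithLp.ofLp b).2) '' B)
  have hT : T.Finite :=
    (hσ.finite_inter_preimage (hB.image _)).subset (inter_subset_inter_left _ Ioo_subset_Icc_self)
  have hcover : (univ : Set ℕ) ⊆ ⋃ p ∈ B ×ˢ T, {i | γ i p.2 = (WithLp.ofLp p.1).1} := by
    intro i _
    obtain ⟨t, ht, htB⟩ := hits i
    exact mem_biUnion (x := (WithLp.toLp 2 (γ i t, σ t), t)) ⟨htB, ht, _, htB, rfl⟩ rfl
  exact infinite_univ (((hB.prod hT).biUnion fun p hp => hfin _ hp.2.1 _).subset hcover)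
end
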